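/- arXiv:2503.23641 — 5 statements merged into one kernel-verified Lean document; each statement's English description precedes it below -/
import Mathlib

section
/- Conversely, if the gradient flow of f is μ-globally exponentially stable, then f satisfies the μ-global Polyak–Łojasiewicz inequality. Precisely: fix x₀ ∈ E and μ > 0, and suppose there is a curve φ : ℝ → E with φ(0) = x₀, having derivative φ'(t) = −∇f(φ(t)) at every t ≥ 0, such that f(φ(t)) − f̲ ≤ (f(x₀) − f̲) · exp(−μ t) for all t ≥ 0. Then ‖∇f(x₀)‖² ≥ μ (f(x₀) − f̲). -/
/-!
Along the flow, `t ↦ f (φ t) - inf f` starts at `f x₀ - inf f` with slope `-‖∇f x₀‖²`, while the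
exponential bound `(f x₀ - inf f) e^{-μt}` starts at the same value with slope `-μ (f x₀ - inf f)`.
A function lying below another on `[0, ∞)` and touching it at `0` has the smaller right
derivative there, which is the inequality.
-/

open Set

theorem HasDerivAt.le_of_le_on_Ici {u v : ℝ → ℝ} {u' v' a : ℝ} (hu : HasDerivAt u u' a)
    (hv : HasDerivAt v v' a) (hle : ∀ t, a ≤ t → u t ≤ v t) (heq : u a = v a) : u' ≤ v' := by
  have hmax : IsLocalMaxOn (u - v) (Ici a) a :=
    Filter.eventually_of_mem self_mem_nhdsWithin fun t ht => by
      simp only [Pi.sub_apply, heq, sub_self, sub_nonpos]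
      exact hle t ht
  have hone : (1 : ℝ) ∈ posTangentConeAt (Ici a) a :=
    mem_posTangentConeAt_of_segment_subset <|
      (segment_subset_uIcc _ _).trans (by simpa [uIcc_of_le] using Icc_subset_Ici_self)
  simpa [sub_nonpos] using
    hmax.hasFDerivWithinAt_nonpos (hu.sub hv).hasDerivWithinAt.hasFDerivWithinAt hone

theorem HasDerivAt.comp_neg_gradient {E : Type*} [NormedAddCommGroup E] [InnerProductSpace ℝ E]
    [CompleteSpace E] {f : E → ℝ} {φ : ℝ → E} {t : ℝ} (hf : DifferentiableAt ℝ f (φ t))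
    (hφ : HasDerivAt φ (-gradient f (φ t)) t) :
    HasDerivAt (f ∘ φ) (-‖gradient f (φ t)‖ ^ 2) t := by
  simpa [-toDual_gradient, inner_neg_right, real_inner_self_eq_norm_sq] using
    hf.hasGradientAt.hasFDerivAt.comp_hasDerivAt t hφ

theorem hasDerivAt_const_add_mul_exp_neg_mul (c k μ : ℝ) :
    HasDerivAt (fun t => c + k * Real.exp (-μ * t)) (-μ * k) 0 := by
  simpa [mul_comm] using
    (((hasDerivAt_id (0 : ℝ)).const_mul (-μ)).exp.const_mul k).const_add c

theorem exponential_stability_implies_gPLI_general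
    {E : Type*} [NormedAddCommGroup E] [InnerProductSpace ℝ E] [FiniteDimensional ℝ E]
    (f : E → ℝ) (hf : Differentiable ℝ f)
    (x₀ : E) (μ : ℝ)
    (φ : ℝ → E) (hφ0 : φ 0 = x₀)
    (hφ : ∀ t : ℝ, 0 ≤ t → HasDerivAt φ (-gradient f (φ t)) t)
    (hGES : ∀ t : ℝ, 0 ≤ t →
      f (φ t) - (⨅ y, f y) ≤ (f x₀ - ⨅ y, f y) * Real.exp (-μ * t)) :
    ‖gradient f x₀‖ ^ 2 ≥ μ * (f x₀ - ⨅ y, f y) := by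
  set c := ⨅ y, f y
  have hbelow : ∀ t, 0 ≤ t → (f ∘ φ) t ≤ c + (f x₀ - c) * Real.exp (-μ * t) := fun t ht => by
    show f (φ t) ≤ _
    linarith [hGES t ht]
  have hslope := ((hφ 0 le_rfl).comp_neg_gradient (hf _)).le_of_le_on_Ici
    (hasDerivAt_const_add_mul_exp_neg_mul c (f x₀ - c) μ) hbelow (by simp [hφ0])
  rw [hφ0] at hslope
  linarith

/-- If the gradient flow of `f` is μ-globally exponentially stable, then `f` satisfies the
μ-global Polyak–Łojasiewicz inequality at the initial point. -/
theorem exponential_stability_implies_gPLI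
    {E : Type*} [NormedAddCommGroup E] [InnerProductSpace ℝ E] [FiniteDimensional ℝ E]
    (f : E → ℝ) (hf : Differentiable ℝ f) (hbdd : BddBelow (Set.range f))
    (x₀ : E) (μ : ℝ) (hμ : 0 < μ)
    (φ : ℝ → E) (hφ0 : φ 0 = x₀)
    (hφ : ∀ t : ℝ, 0 ≤ t → HasDerivAt φ (-gradient f (φ t)) t)
    (hGES : ∀ t : ℝ, 0 ≤ t →
      f (φ t) - (⨅ y, f y) ≤ (f x₀ - ⨅ y, f y) * Real.exp (-μ * t)) :
    ‖gradient f x₀‖ ^ 2 ≥ μ * (f x₀ - ⨅ y, f y) :=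
  exponential_stability_implies_gPLI_general f hf x₀ μ φ hφ0 hφ hGES
end

section
/- Suppose f satisfies: (i) an ε-local Polyak–Łojasiewicz inequality, i.e. there exist ε > 0 and μ > 0 with ‖∇f(x)‖² ≥ μ (f(x) − f̲) for all x with f(x) − f̲ ≤ ε; and (ii) there exists ℓ > 0 such that ‖∇f(x)‖ ≥ ℓ for all x with f(x) − f̲ ≥ ε. Then f satisfies a class-K_SAT lower bound: there exist constants a, b > 0 such that ‖∇f(x)‖ ≥ √( a (f(x) − f̲) / (b + (f(x) − f̲)) ) for all x ∈ E. -/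
/-- A local PŁ inequality together with a gradient norm bounded away from zero outside the
corresponding sublevel set implies a class-K_SAT lower bound. -/
theorem local_PLI_and_lower_bound_implies_KSAT
    {E : Type*} [NormedAddCommGroup E] [InnerProductSpace ℝ E] [FiniteDimensional ℝ E]
    (f : E → ℝ) (hf : Differentiable ℝ f) (hbdd : BddBelow (Set.range f))
    (ε μ : ℝ) (hε : 0 < ε) (hμ : 0 < μ)
    (hloc : ∀ x : E, f x - (⨅ y, f y) ≤ ε → ‖gradient f x‖ ^ 2 ≥ μ * (f x - ⨅ y, f y))
    (ℓ : ℝ) (hℓ : 0 < ℓ)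
    (hfar : ∀ x : E, f x - (⨅ y, f y) ≥ ε → ‖gradient f x‖ ≥ ℓ) :
    ∃ a b : ℝ, 0 < a ∧ 0 < b ∧
      ∀ x : E, ‖gradient f x‖ ≥
        Real.sqrt (a * (f x - ⨅ y, f y) / (b + (f x - ⨅ y, f y))) := by
  refine ⟨min μ (ℓ ^ 2), 1, lt_min hμ (by positivity), one_pos, fun x => ?_⟩
  set t := f x - ⨅ y, f y with ht
  have htnn : 0 ≤ t := by
    have : (⨅ y, f y) ≤ f x := ciInf_le hbdd x
    linarith
  have hkey : min μ (ℓ ^ 2) * t / (1 + t) ≤ ‖gradient f x‖ ^ 2 := by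
    rcases le_or_gt t ε with h | h
    · have h1 := hloc x h
      have h2 : min μ (ℓ ^ 2) * t / (1 + t) ≤ μ * t := by
        rw [div_le_iff₀ (by linarith)]
        have : min μ (ℓ ^ 2) ≤ μ := min_le_left _ _
        nlinarith [mul_nonneg htnn htnn]
      linarith
    · have h1 := hfar x h.le
      have h2 : ℓ ^ 2 ≤ ‖gradient f x‖ ^ 2 := by
        have := norm_nonneg (gradient f x)
        nlinarith
      have h3 : min μ (ℓ ^ 2) * t / (1 + t) ≤ ℓ ^ 2 := by
        rw [div_le_iff₀ (by linarith)]
        have : min μ (ℓ ^ 2) ≤ ℓ ^ 2 := min_le_right _ _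
        nlinarith
      linarith
  calc Real.sqrt (min μ (ℓ ^ 2) * t / (1 + t)) ≤ Real.sqrt (‖gradient f x‖ ^ 2) :=
        Real.sqrt_le_sqrt hkey
    _ = ‖gradient f x‖ := by rw [Real.sqrt_sq (norm_nonneg _)]
end

section
/- If f satisfies a class-K_SAT lower bound with constants a, b > 0, then along any gradient-flow solution the decay is exponential once inside a sublevel set: for every ε > 0 and every t̄ ≥ 0 with f(φ(t̄)) − f̲ ≤ ε, one has for all t ≥ t̄ that f(φ(t)) − f̲ ≤ (f(φ(t̄)) − f̲) · exp( −(a/(b+ε)) (t − t̄) ). -/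
/-!
Along the flow, `g(t) = f(φ t) - inf f` has derivative `-‖∇f(φ t)‖²`, so `g` is nonincreasing
and stays below `ε` after `t̄`. On `[0, ε]` the function `u ↦ a u / (b + u)` dominates the linear
function `u ↦ a u / (b + ε)`, so the K_SAT bound gives `g' ≤ -(a / (b + ε)) g` after `t̄`, and
Grönwall's inequality yields the exponential decay.
-/

open Set Real

section GradientFlow

variable {E : Type*} [NormedAddCommGroup E] [InnerProductSpace ℝ E] [CompleteSpace E]
  {f : E → ℝ} {φ : ℝ → E}

theorem hasDerivAt_comp_of_hasDerivAt_neg_gradient {s : ℝ} (hf : DifferentiableAt ℝ f (φ s))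
    (hφ : HasDerivAt φ (-gradient f (φ s)) s) :
    HasDerivAt (fun u => f (φ u)) (-‖gradient f (φ s)‖ ^ 2) s := by
  have h := hf.hasFDerivAt.comp_hasDerivAt s hφ
  rwa [map_neg, hf.hasGradientAt.fderiv_apply, real_inner_self_eq_norm_sq] at h

theorem antitoneOn_comp_of_gradient_flow (hf : Differentiable ℝ f)
    (hφ : ∀ t, 0 ≤ t → HasDerivAt φ (-gradient f (φ t)) t) :
    AntitoneOn (fun t => f (φ t)) (Ici 0) := by
  have hderiv (t : ℝ) (ht : 0 ≤ t) := hasDerivAt_comp_of_hasDerivAt_neg_gradient (hf _) (hφ t ht)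
  refine antitoneOn_of_hasDerivWithinAt_nonpos (f' := fun t => -‖gradient f (φ t)‖ ^ 2)
    (convex_Ici 0)
    (fun t ht => (hderiv t ht).continuousAt.continuousWithinAt) (fun t ht => ?_)
    (fun t _ => neg_nonpos.2 (sq_nonneg _))
  rw [interior_Ici] at ht
  exact (hderiv t ht.le).hasDerivWithinAt

end GradientFlow

theorem div_add_mul_le_sq_of_sqrt_le {a b u ε n : ℝ} (ha : 0 ≤ a) (hb : 0 < b) (hu : 0 ≤ u)
    (huε : u ≤ ε) (h : √(a * u / (b + u)) ≤ n) :
    a / (b + ε) * u ≤ n ^ 2 :=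
  calc a / (b + ε) * u = a * u / (b + ε) := div_mul_eq_mul_div a (b + ε) u
    _ ≤ a * u / (b + u) := div_le_div_of_nonneg_left (by positivity) (by positivity) (by linarith)
    _ ≤ n ^ 2 := (sqrt_le_left ((sqrt_nonneg _).trans h)).1 h

theorem le_mul_exp_of_hasDerivAt_le_neg_mul {g g' : ℝ → ℝ} {c t₀ t : ℝ}
    (hg : ∀ s ∈ Icc t₀ t, HasDerivAt g (g' s) s) (hbound : ∀ s ∈ Ico t₀ t, g' s ≤ -c * g s)
    (ht : t₀ ≤ t) :
    g t ≤ g t₀ * exp (-c * (t - t₀)) := by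
  have := le_gronwallBound_of_liminf_deriv_right_le (ε := 0)
    (fun s hs => (hg s hs).continuousAt.continuousWithinAt)
    (fun s hs _ hr => (hg s (Ico_subset_Icc_self hs)).hasDerivWithinAt.liminf_right_slope_le hr)
    le_rfl (fun s hs => (hbound s hs).trans_eq (add_zero _).symm) t (right_mem_Icc.2 ht)
  rwa [gronwallBound_ε0] at this

theorem KSAT_exponential_decay_in_sublevel_general
    {E : Type*} [NormedAddCommGroup E] [InnerProductSpace ℝ E] [FiniteDimensional ℝ E]
    (f : E → ℝ) (hf : Differentiable ℝ f) (hbdd : BddBelow (Set.range f))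
    (a b : ℝ) (ha : 0 < a) (hb : 0 < b)
    (hKSAT : ∀ x : E, ‖gradient f x‖ ≥
      Real.sqrt (a * (f x - ⨅ y, f y) / (b + (f x - ⨅ y, f y))))
    (φ : ℝ → E) (hφ : ∀ t : ℝ, 0 ≤ t → HasDerivAt φ (-gradient f (φ t)) t)
    (ε : ℝ)
    (tbar : ℝ) (htbar : 0 ≤ tbar) (hlevel : f (φ tbar) - (⨅ y, f y) ≤ ε)
    (t : ℝ) (ht : tbar ≤ t) :
    f (φ t) - (⨅ y, f y) ≤
      (f (φ tbar) - ⨅ y, f y) * Real.exp (-(a / (b + ε)) * (t - tbar)) := by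
  set m := ⨅ y, f y
  have hanti := antitoneOn_comp_of_gradient_flow hf hφ
  refine le_mul_exp_of_hasDerivAt_le_neg_mul (g := fun s => f (φ s) - m)
    (fun s hs => (hasDerivAt_comp_of_hasDerivAt_neg_gradient (hf _)
      (hφ s (htbar.trans hs.1))).sub_const m) (fun s hs => ?_) ht
  have hgap : 0 ≤ f (φ s) - m := sub_nonneg.2 (ciInf_le hbdd _)
  have hsub : f (φ s) - m ≤ ε :=
    (sub_le_sub_right (hanti htbar (htbar.trans hs.1) hs.1) m).trans hlevel
  simpa using neg_le_neg (div_add_mul_le_sq_of_sqrt_le ha.le hb hgap hsub (hKSAT (φ s)))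

/-- Under a class-K_SAT lower bound, the gradient flow decays exponentially once it enters a
sublevel set. -/
theorem KSAT_exponential_decay_in_sublevel
    {E : Type*} [NormedAddCommGroup E] [InnerProductSpace ℝ E] [FiniteDimensional ℝ E]
    (f : E → ℝ) (hf : Differentiable ℝ f) (hbdd : BddBelow (Set.range f))
    (a b : ℝ) (ha : 0 < a) (hb : 0 < b)
    (hKSAT : ∀ x : E, ‖gradient f x‖ ≥
      Real.sqrt (a * (f x - ⨅ y, f y) / (b + (f x - ⨅ y, f y))))
    (φ : ℝ → E) (hφ : ∀ t : ℝ, 0 ≤ t → HasDerivAt φ (-gradient f (φ t)) t)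
    (ε : ℝ) (hε : 0 < ε)
    (tbar : ℝ) (htbar : 0 ≤ tbar) (hlevel : f (φ tbar) - (⨅ y, f y) ≤ ε)
    (t : ℝ) (ht : tbar ≤ t) :
    f (φ t) - (⨅ y, f y) ≤
      (f (φ tbar) - ⨅ y, f y) * Real.exp (-(a / (b + ε)) * (t - tbar)) :=
  KSAT_exponential_decay_in_sublevel_general f hf hbdd a b ha hb hKSAT φ hφ ε tbar htbar hlevel t ht
end

section
/- Local exponential rate of the scalar LQR at the optimum: the local PŁ ratio m(k) = (deriv J(k))² / (J(k) − J(k*)) has a positive limit at the optimal gain; precisely, m(k* + ε) → 2r/√(a² + q/r) as ε → 0 with ε ≠ 0. Hence J satisfies a local Polyak–Łojasiewicz inequality near k*. -/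
open Filter Topology

/-!
Writing `k* = a + s` with `s = √(a² + q/r)`, the optimal gain is the root of the numerator
`r k² - 2 a r k - q = r (k - k*) (k + k* - 2a)` of `J'`, and the optimality gap is
`J k - J k* = r (k - k*)² / (2 (k - a))`. Hence `J'(k)² = c(k) · (J k - J k*)` with the rational
function `c(k) = r (k + k* - 2a)² / (2 (k - a)³)`, which is continuous at `k*` with value `2r/s > 0`.
The limit of the PŁ ratio is `c(k*)`, and the local PŁ inequality holds with any constant below it.
-/

theorem tendsto_div_of_eventually_eq_mul {α 𝕜 : Type*} [Field 𝕜] [TopologicalSpace 𝕜]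
    {f g c : α → 𝕜} {l : Filter α} {L : 𝕜} (hc : Tendsto c l (𝓝 L))
    (h : ∀ᶠ x in l, f x = c x * g x ∧ g x ≠ 0) :
    Tendsto (fun x => f x / g x) l (𝓝 L) :=
  hc.congr' <| h.mono fun _ ⟨hfg, hg⟩ => by simp only [hfg, mul_div_cancel_right₀ _ hg]

theorem exists_pos_mul_le_of_eventually_eq_mul {f g c : ℝ → ℝ} {x₀ : ℝ}
    (hc : ContinuousAt c x₀) (hc₀ : 0 < c x₀)
    (h : ∀ᶠ x in 𝓝 x₀, f x = c x * g x ∧ 0 ≤ g x) :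
    ∃ δ : ℝ, 0 < δ ∧ ∃ μ : ℝ, 0 < μ ∧ ∀ x : ℝ, |x - x₀| < δ → f x ≥ μ * g x := by
  have hc_half : ∀ᶠ x in 𝓝 x₀, c x₀ / 2 < c x := hc.eventually (eventually_gt_nhds (by linarith))
  obtain ⟨δ, hδ, hnear⟩ := Metric.eventually_nhds_iff.mp (h.and hc_half)
  refine ⟨δ, hδ, c x₀ / 2, by positivity, fun x hx => ?_⟩
  obtain ⟨⟨hfg, hg⟩, hcx⟩ := hnear (by rwa [Real.dist_eq])
  rw [hfg]
  exact mul_le_mul_of_nonneg_right hcx.le hg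

namespace ScalarLQR

noncomputable def cost (a q r k : ℝ) : ℝ := (r * k ^ 2 + q) / (2 * (k - a))

noncomputable def plFactor (a r kstar k : ℝ) : ℝ := r * (k + kstar - 2 * a) ^ 2 / (2 * (k - a) ^ 3)

variable {a q r kstar k : ℝ}

theorem optimalGain_isRoot (hr : r ≠ 0) (hdisc : 0 ≤ a ^ 2 + q / r) :
    r * (a + √(a ^ 2 + q / r)) ^ 2 - 2 * a * r * (a + √(a ^ 2 + q / r)) - q = 0 := by
  have hsq := Real.sq_sqrt hdisc
  have hq : r * (q / r) = q := mul_div_cancel₀ q hr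
  linear_combination r * hsq + hq

theorem hasDerivAt_cost (hk : k ≠ a) :
    HasDerivAt (cost a q r) ((r * k ^ 2 - 2 * a * r * k - q) / (2 * (k - a) ^ 2)) k := by
  have hden : 2 * (k - a) ≠ 0 := mul_ne_zero two_ne_zero (sub_ne_zero.mpr hk)
  have hnum : HasDerivAt (fun x => r * x ^ 2 + q) (r * (2 * k)) k := by
    simpa using ((hasDerivAt_pow 2 k).const_mul r).add_const q
  have hlin : HasDerivAt (fun x => 2 * (x - a)) 2 k := by
    simpa using ((hasDerivAt_id k).sub_const a).const_mul 2
  refine (hnum.div hlin hden).congr_deriv ?_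
  rw [div_eq_div_iff (by positivity) (by positivity)]
  ring

theorem deriv_cost (hopt : r * kstar ^ 2 - 2 * a * r * kstar - q = 0) (hk : k ≠ a) :
    deriv (cost a q r) k = r * (k - kstar) * (k + kstar - 2 * a) / (2 * (k - a) ^ 2) := by
  rw [(hasDerivAt_cost hk).deriv]
  congr 1
  linear_combination hopt

theorem cost_sub_cost (hopt : r * kstar ^ 2 - 2 * a * r * kstar - q = 0) (hk : k ≠ a)
    (hstar : kstar ≠ a) :
    cost a q r k - cost a q r kstar = r * (k - kstar) ^ 2 / (2 * (k - a)) := by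
  have hka : k - a ≠ 0 := sub_ne_zero.mpr hk
  have hsa : kstar - a ≠ 0 := sub_ne_zero.mpr hstar
  rw [cost, cost, div_sub_div _ _ (by positivity) (by positivity),
    div_eq_div_iff (by positivity) (by positivity)]
  linear_combination (4 * (k - a) * (k - kstar)) * hopt

theorem deriv_cost_sq (hopt : r * kstar ^ 2 - 2 * a * r * kstar - q = 0) (hk : k ≠ a)
    (hstar : kstar ≠ a) :
    deriv (cost a q r) k ^ 2 = plFactor a r kstar k * (cost a q r k - cost a q r kstar) := by
  have hka : k - a ≠ 0 := sub_ne_zero.mpr hk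
  rw [deriv_cost hopt hk, cost_sub_cost hopt hk hstar, plFactor]
  field_simp

theorem continuousAt_plFactor (hk : k ≠ a) : ContinuousAt (plFactor a r kstar) k := by
  have hka : (k - a) ^ 3 ≠ 0 := pow_ne_zero 3 (sub_ne_zero.mpr hk)
  unfold plFactor
  fun_prop (disch := positivity)

theorem plFactor_self_of_eq_add {s : ℝ} (hs : s ≠ 0) (hkstar : kstar = a + s) :
    plFactor a r kstar kstar = 2 * r / s := by
  subst hkstar
  rw [plFactor, show a + s + (a + s) - 2 * a = 2 * s by ring, show a + s - a = s by ring]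
  field_simp

end ScalarLQR

open ScalarLQR in
/-- Local exponential rate of the scalar LQR at the optimum: the local PŁ ratio
`m(k* + ε) = (deriv J (k* + ε))² / (J(k* + ε) − J(k*))` tends to `2r/√(a² + q/r)` as
`ε → 0`, `ε ≠ 0`; hence `J` satisfies a local Polyak–Łojasiewicz inequality near `k*`. -/
theorem scalar_LQR_local_PL_rate
    (a q r : ℝ) (hq : 0 < q) (hr : 0 < r)
    (J : ℝ → ℝ) (hJ : ∀ k : ℝ, J k = (r * k ^ 2 + q) / (2 * (k - a)))
    (kstar : ℝ) (hkstar : kstar = a + Real.sqrt (a ^ 2 + q / r)) :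
    Tendsto (fun ε : ℝ => (deriv J (kstar + ε)) ^ 2 / (J (kstar + ε) - J kstar))
        (nhdsWithin 0 {(0 : ℝ)}ᶜ) (nhds (2 * r / Real.sqrt (a ^ 2 + q / r))) ∧
      ∃ δ : ℝ, 0 < δ ∧ ∃ μ : ℝ, 0 < μ ∧
        ∀ k : ℝ, |k - kstar| < δ → (deriv J k) ^ 2 ≥ μ * (J k - J kstar) := by
  obtain rfl : J = cost a q r := funext hJ
  have hdisc : 0 < a ^ 2 + q / r := by positivity
  have hs : 0 < √(a ^ 2 + q / r) := Real.sqrt_pos.mpr hdisc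
  have hopt : r * kstar ^ 2 - 2 * a * r * kstar - q = 0 :=
    hkstar ▸ optimalGain_isRoot hr.ne' hdisc.le
  have hstar : a < kstar := by linarith
  have hc := continuousAt_plFactor (r := r) (kstar := kstar) hstar.ne'
  have hc_star := plFactor_self_of_eq_add (r := r) hs.ne' hkstar
  constructor
  · have hshift : Tendsto (fun ε : ℝ => kstar + ε) (𝓝[≠] 0) (𝓝 kstar) := by
      simpa using (continuous_const_add kstar).tendsto 0 |>.mono_left nhdsWithin_le_nhds
    refine tendsto_div_of_eventually_eq_mul (hc_star ▸ hc.tendsto.comp hshift) ?_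
    filter_upwards [hshift.eventually (eventually_ne_nhds hstar.ne'), self_mem_nhdsWithin]
      with ε hka (hε : ε ≠ 0)
    refine ⟨deriv_cost_sq hopt hka hstar.ne', ?_⟩
    rw [cost_sub_cost hopt hka hstar.ne']
    simp [hr.ne', hε, sub_ne_zero.mpr hka]
  · refine exists_pos_mul_le_of_eventually_eq_mul hc (by rw [hc_star]; positivity) ?_
    filter_upwards [eventually_gt_nhds hstar] with k hk
    refine ⟨deriv_cost_sq hopt hk.ne' hstar.ne', ?_⟩
    rw [cost_sub_cost hopt hk.ne' hstar.ne']
    have : 0 < k - a := sub_pos.mpr hk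
    positivity
end

section
/- The scalar continuous-time LQR cost never satisfies a global Polyak–Łojasiewicz inequality: there is no μ > 0 such that (deriv J(k))² ≥ μ (J(k) − J(k*)) for all k > a. -/
/-! Writing the cost as `J k = r (k + a) / 2 + (r a² + q) / (2 (k - a))` shows that `J k → ∞` as
`k → ∞` while `J' k → r / 2`. A PL inequality would force `J' k ²` to grow like `J k`. -/

open Filter Topology

theorem Filter.Tendsto.not_exists_eventually_mul_sub_le_sq {α : Type*} {l : Filter α} [l.NeBot]
    {f g : α → ℝ} {L : ℝ} (hf : Tendsto f l atTop) (hg : Tendsto g l (𝓝 L)) (c : ℝ) :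
    ¬ ∃ μ : ℝ, 0 < μ ∧ ∀ᶠ x in l, μ * (f x - c) ≤ g x ^ 2 := by
  rintro ⟨μ, hμ, hle⟩
  have hlower : Tendsto (fun x => μ * (f x - c)) l atTop :=
    (tendsto_atTop_add_const_right l (-c) hf).const_mul_atTop hμ
  exact not_tendsto_atTop_of_tendsto_nhds (hg.pow 2) (tendsto_atTop_mono' l hle hlower)

/-- `∫₀^∞ (q x² + r u²) dt` for `ẋ = a x + u`, `x 0 = 1`, under the feedback `u = -k x`. -/
noncomputable def lqrCost (a q r k : ℝ) : ℝ := (r * k ^ 2 + q) / (2 * (k - a))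

namespace lqrCost

variable (a q r : ℝ)

theorem eq_add_div {k : ℝ} (hk : k ≠ a) :
    lqrCost a q r k = r / 2 * (k + a) + (r * a ^ 2 + q) / (2 * (k - a)) := by
  have : k - a ≠ 0 := sub_ne_zero.mpr hk
  unfold lqrCost
  field_simp
  ring

theorem hasDerivAt {k : ℝ} (hk : k ≠ a) :
    HasDerivAt (lqrCost a q r) (r / 2 - (r * a ^ 2 + q) / (2 * (k - a) ^ 2)) k := by
  have hka : k - a ≠ 0 := sub_ne_zero.mpr hk
  have hnum : HasDerivAt (fun x => r * x ^ 2 + q) (r * (2 * k)) k := by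
    simpa using ((hasDerivAt_pow 2 k).const_mul r).add_const q
  have hden : HasDerivAt (fun x => 2 * (x - a)) 2 k := by
    simpa using ((hasDerivAt_id k).sub_const a).const_mul 2
  refine (hnum.div hden (by positivity)).congr_deriv ?_
  field_simp
  ring

theorem tendsto_atTop {r : ℝ} (hr : 0 < r) : Tendsto (lqrCost a q r) atTop atTop := by
  have hlin : Tendsto (fun k => r / 2 * (k + a)) atTop atTop :=
    (tendsto_atTop_add_const_right _ a tendsto_id).const_mul_atTop (by positivity)
  have hden : Tendsto (fun k => 2 * (k - a)) atTop atTop :=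
    (tendsto_atTop_add_const_right _ (-a) tendsto_id).const_mul_atTop two_pos
  refine (hlin.atTop_add ((tendsto_const_nhds (x := r * a ^ 2 + q)).div_atTop hden)).congr' ?_
  filter_upwards [eventually_ne_atTop a] with k hk
  exact (eq_add_div a q r hk).symm

theorem tendsto_deriv : Tendsto (deriv (lqrCost a q r)) atTop (𝓝 (r / 2)) := by
  have hden : Tendsto (fun k => 2 * (k - a) ^ 2) atTop atTop :=
    ((tendsto_pow_atTop two_ne_zero).comp
      (tendsto_atTop_add_const_right _ (-a) tendsto_id)).const_mul_atTop two_pos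
  have hlim := (tendsto_const_nhds (x := r / 2)).sub
    ((tendsto_const_nhds (x := r * a ^ 2 + q)).div_atTop hden)
  rw [sub_zero] at hlim
  refine hlim.congr' ?_
  filter_upwards [eventually_ne_atTop a] with k hk
  exact (hasDerivAt a q r hk).deriv.symm

end lqrCost

theorem scalar_LQR_no_global_PLI_general
    (a q r : ℝ) (hr : 0 < r)
    (J : ℝ → ℝ) (hJ : ∀ k : ℝ, J k = (r * k ^ 2 + q) / (2 * (k - a)))
    (kstar : ℝ) :
    ¬ ∃ μ : ℝ, 0 < μ ∧
      ∀ k : ℝ, a < k → (deriv J k) ^ 2 ≥ μ * (J k - J kstar) := by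
  rintro ⟨μ, hμ, hPL⟩
  obtain rfl : J = lqrCost a q r := funext hJ
  exact (lqrCost.tendsto_atTop a q hr).not_exists_eventually_mul_sub_le_sq
    (lqrCost.tendsto_deriv a q r) _ ⟨μ, hμ, (eventually_gt_atTop a).mono hPL⟩

/-- The scalar continuous-time LQR cost never satisfies a global Polyak–Łojasiewicz
inequality on the stabilizing set `k > a`. -/
theorem scalar_LQR_no_global_PLI
    (a q r : ℝ) (hq : 0 < q) (hr : 0 < r)
    (J : ℝ → ℝ) (hJ : ∀ k : ℝ, J k = (r * k ^ 2 + q) / (2 * (k - a)))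
    (kstar : ℝ) (hkstar : kstar = a + Real.sqrt (a ^ 2 + q / r)) :
    ¬ ∃ μ : ℝ, 0 < μ ∧
      ∀ k : ℝ, a < k → (deriv J k) ^ 2 ≥ μ * (J k - J kstar) :=
  scalar_LQR_no_global_PLI_general a q r hr J hJ kstar
end
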